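/- Let G be a finite group and let η = Σ_{i ∈ I} β_i·δ_{g_i} be a nonnegative measure on G supported on finitely many elements g_i ∈ G indexed by a finite set I, with all β_i > 0 and β_i ≤ c'·β_j for all i, j ∈ I. Suppose ε > 0 is such that for every φ : G → ℂ with Σ_g φ(g) = 0 and ‖φ‖₂ = 1, there exist i, j ∈ I with ‖δ_{g_i g_j^{-1}} ∗ φ − φ‖₂ > ε. Then there is C₁ > 0, depending only on c', ε and |I|, such that ‖η ∗ φ‖₂ ≤ (1 − C₁)·‖η‖₁·‖φ‖₂ for every φ : G → ℂ with Σ_g φ(g) = 0. -/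

import Mathlib

universe u v

noncomputable section

/-- The `ℓ²` (Euclidean) norm on functions on a finite group. -/
def l2norm {G : Type u} [Fintype G] (φ : G → ℂ) : ℝ :=
  Real.sqrt (∑ g, ‖φ g‖ ^ 2)

/-!
Write `ρ` for the left regular representation on `ℓ²(G)`, so that `η ∗ φ = ∑ βᵢ ρ(gᵢ) φ`.
For vectors `uᵢ` of a common norm `r` one has
`‖∑ βᵢ uᵢ‖² = r² (∑ βᵢ)² - ½ ∑ᵢⱼ βᵢ βⱼ ‖uᵢ - uⱼ‖²`,
so it suffices to find two translates `ρ(gₐ) φ`, `ρ(g_b) φ` at distance at least `(ε/2) ‖φ‖`.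
The hypothesis applied to `ψ = ρ(gₖ) φ` gives `‖ρ(gᵢ gⱼ⁻¹) ψ - ψ‖ ≥ ε ‖φ‖`, and the triangle
inequality through `ρ(gᵢ) φ` bounds the left side by `‖ψ - ρ(gⱼ) φ‖ + ‖ρ(gᵢ) φ - ψ‖`.
Comparable weights give `βₐ β_b ≥ (∑ β)² / (|I| c')²`, hence
`‖η ∗ φ‖² ≤ (1 - ε² / (8 |I|² c'²)) ‖η‖₁² ‖φ‖²`, and `√(1 - x) ≤ 1 - x/2` gives
`C₁ = ε² / (16 |I|² c'²)`.
-/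

open Finset

section InnerProductSpace

variable {𝕜 E ι : Type*} [RCLike 𝕜] [NormedAddCommGroup E] [InnerProductSpace 𝕜 E] [Fintype ι]

theorem norm_sum_smul_sq_of_norm_eq (β : ι → ℝ) {u : ι → E} {r : ℝ} (hu : ∀ i, ‖u i‖ = r) :
    ‖∑ i, (β i : 𝕜) • u i‖ ^ 2 =
      r ^ 2 * (∑ i, β i) ^ 2 - (∑ i, ∑ j, β i * β j * ‖u i - u j‖ ^ 2) / 2 := by
  have hsum : ‖∑ i, (β i : 𝕜) • u i‖ ^ 2 =
      ∑ i, ∑ j, β i * β j * RCLike.re (inner 𝕜 (u i) (u j)) := by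
    rw [@norm_sq_eq_re_inner 𝕜, sum_inner, map_sum]
    refine sum_congr rfl fun i _ => ?_
    rw [inner_sum, map_sum]
    refine sum_congr rfl fun j _ => ?_
    rw [inner_smul_left, inner_smul_right, RCLike.conj_ofReal, ← mul_assoc, ← RCLike.ofReal_mul,
      RCLike.re_ofReal_mul]
  have hdiff : ∑ i, ∑ j, β i * β j * ‖u i - u j‖ ^ 2 =
      2 * (r ^ 2 * (∑ i, β i) ^ 2) -
        2 * ∑ i, ∑ j, β i * β j * RCLike.re (inner 𝕜 (u i) (u j)) := by
    rw [sq (∑ i, β i), sum_mul_sum, mul_sum, mul_sum, mul_sum, ← sum_sub_distrib]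
    refine sum_congr rfl fun i _ => ?_
    rw [mul_sum, mul_sum, mul_sum, ← sum_sub_distrib]
    refine sum_congr rfl fun j _ => ?_
    rw [@norm_sub_sq 𝕜, hu, hu]
    ring
  rw [hsum, hdiff]
  ring

theorem norm_sum_smul_sq_le_of_norm_eq {β : ι → ℝ} (hβ : ∀ i, 0 ≤ β i) {u : ι → E} {r : ℝ}
    (hu : ∀ i, ‖u i‖ = r) (a b : ι) :
    ‖∑ i, (β i : 𝕜) • u i‖ ^ 2 ≤ r ^ 2 * (∑ i, β i) ^ 2 - β a * β b * ‖u a - u b‖ ^ 2 / 2 := by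
  have hterm : ∀ i j, 0 ≤ β i * β j * ‖u i - u j‖ ^ 2 := fun i j => by
    have := hβ i; have := hβ j; positivity
  have hab : β a * β b * ‖u a - u b‖ ^ 2 ≤ ∑ i, ∑ j, β i * β j * ‖u i - u j‖ ^ 2 :=
    (single_le_sum (fun j _ => hterm a j) (mem_univ b)).trans
      (single_le_sum (fun i _ => sum_nonneg fun j _ => hterm i j) (mem_univ a))
  rw [norm_sum_smul_sq_of_norm_eq β hu]
  linarith

end InnerProductSpace

theorem LinearIsometryEquiv.norm_mul_inv_apply_sub_le {R E : Type*} [Semiring R]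
    [SeminormedAddCommGroup E] [Module R E] (A B : E ≃ₗᵢ[R] E) (x y : E) :
    ‖(A * B⁻¹) y - y‖ ≤ ‖y - B x‖ + ‖A x - y‖ :=
  calc ‖(A * B⁻¹) y - y‖ ≤ ‖A (B.symm y) - A x‖ + ‖A x - y‖ :=
        norm_sub_le_norm_sub_add_norm_sub ..
    _ = ‖y - B x‖ + ‖A x - y‖ := by
      rw [← map_sub, A.norm_map, ← B.norm_map, map_sub, B.apply_symm_apply]

theorem sq_sum_le_sq_mul_mul_of_le_mul {ι : Type*} [Fintype ι] {β : ι → ℝ} {c' K : ℝ}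
    (hβ : ∀ i, 0 ≤ β i) (hβc : ∀ i j, β i ≤ c' * β j) (hcK : Fintype.card ι * c' ≤ K) (a b : ι) :
    (∑ i, β i) ^ 2 ≤ K ^ 2 * (β a * β b) := by
  have hS : ∀ j, ∑ i, β i ≤ K * β j := fun j =>
    calc ∑ i, β i ≤ Fintype.card ι * (c' * β j) := by
          simpa using sum_le_card_nsmul univ β (c' * β j) fun i _ => hβc i j
      _ ≤ K * β j := by rw [← mul_assoc]; exact mul_le_mul_of_nonneg_right hcK (hβ j)
  have hS0 : 0 ≤ ∑ i, β i := sum_nonneg fun i _ => hβ i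
  calc (∑ i, β i) ^ 2 = (∑ i, β i) * ∑ i, β i := sq _
    _ ≤ (K * β a) * (K * β b) := mul_le_mul (hS a) (hS b) hS0 (hS0.trans (hS a))
    _ = K ^ 2 * (β a * β b) := by ring

theorem le_mul_one_sub_half_of_sq_le {a s x : ℝ} (hs : 0 ≤ s) (h : a ^ 2 ≤ s ^ 2 * (1 - x)) :
    a ≤ s * (1 - x / 2) := by
  rcases hs.eq_or_lt with rfl | hs
  · nlinarith
  · have hx : x ≤ 1 := by nlinarith [sq_nonneg a, pow_pos hs 2]
    have ht : 0 ≤ s * (1 - x / 2) := by nlinarith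
    nlinarith [sq_nonneg (s * x)]

section LeftRegular

variable {G : Type*} [Group G] [Fintype G]

def leftRegular : G →* (EuclideanSpace ℂ G ≃ₗᵢ[ℂ] EuclideanSpace ℂ G) where
  toFun a := LinearIsometryEquiv.piLpCongrLeft 2 ℂ ℂ (Equiv.mulLeft a)
  map_one' := by ext; simp [LinearIsometryEquiv.piLpCongrLeft_apply, -Equiv.mulLeft_one]
  map_mul' a b := by
    ext; simp [LinearIsometryEquiv.piLpCongrLeft_apply, -Equiv.mulLeft_mul, mul_assoc]

@[simp]
theorem leftRegular_apply (a : G) (φ : EuclideanSpace ℂ G) (x : G) :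
    leftRegular a φ x = φ (a⁻¹ * x) := by
  simp [leftRegular, LinearIsometryEquiv.piLpCongrLeft_apply]

theorem sum_leftRegular_apply (a : G) (φ : EuclideanSpace ℂ G) :
    ∑ x, leftRegular a φ x = ∑ x, φ x := by
  simpa using Equiv.sum_comp (Equiv.mulLeft a⁻¹) φ

def NoAlmostInvariantVectors {ι : Type*} (g : ι → G) (ε : ℝ) : Prop :=
  ∀ ψ : EuclideanSpace ℂ G, ∑ x, ψ x = 0 → ‖ψ‖ = 1 →
    ∃ i j, ε < ‖leftRegular (g i * (g j)⁻¹) ψ - ψ‖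

variable {ι : Type*} {g : ι → G} {ε : ℝ}

theorem NoAlmostInvariantVectors.exists_mul_norm_le_norm_leftRegular_mul_inv_sub [Nonempty ι]
    (h : NoAlmostInvariantVectors g ε) {ψ : EuclideanSpace ℂ G} (hψ : ∑ x, ψ x = 0) :
    ∃ i j, ε * ‖ψ‖ ≤ ‖leftRegular (g i * (g j)⁻¹) ψ - ψ‖ := by
  rcases eq_or_ne ψ 0 with rfl | hψ0
  · obtain ⟨k⟩ := ‹Nonempty ι›
    exact ⟨k, k, by simp⟩
  obtain ⟨i, j, hij⟩ := h ((‖ψ‖ : ℂ)⁻¹ • ψ)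
    (by simp only [PiLp.smul_apply, smul_eq_mul, ← mul_sum, hψ, mul_zero]) (norm_smul_inv_norm hψ0)
  refine ⟨i, j, ?_⟩
  rw [map_smul, ← smul_sub, norm_smul, norm_inv, Complex.norm_real, norm_norm,
    lt_inv_mul_iff₀ (norm_pos_iff.2 hψ0)] at hij
  rw [mul_comm]
  exact hij.le

theorem NoAlmostInvariantVectors.exists_div_two_mul_norm_le_norm_leftRegular_sub [Nonempty ι]
    (h : NoAlmostInvariantVectors g ε) {φ : EuclideanSpace ℂ G} (hφ : ∑ x, φ x = 0) :
    ∃ a b, ε / 2 * ‖φ‖ ≤ ‖leftRegular (g a) φ - leftRegular (g b) φ‖ := by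
  obtain ⟨k⟩ := ‹Nonempty ι›
  set ψ := leftRegular (g k) φ
  obtain ⟨i, j, hij⟩ :=
    h.exists_mul_norm_le_norm_leftRegular_mul_inv_sub (ψ := ψ) (by rw [sum_leftRegular_apply, hφ])
  have htri := (leftRegular (g i)).norm_mul_inv_apply_sub_le (leftRegular (g j)) φ ψ
  rw [← map_inv, ← map_mul] at htri
  rw [LinearIsometryEquiv.norm_map] at hij
  by_cases hkj : ε / 2 * ‖φ‖ ≤ ‖ψ - leftRegular (g j) φ‖
  · exact ⟨k, j, hkj⟩
  · exact ⟨i, k, by linarith⟩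

theorem NoAlmostInvariantVectors.norm_sum_smul_leftRegular_le [Fintype ι] [Nonempty ι]
    (h : NoAlmostInvariantVectors g ε) (hε : 0 ≤ ε) {β : ι → ℝ} {c' K : ℝ} (hβ : ∀ i, 0 ≤ β i)
    (hβc : ∀ i j, β i ≤ c' * β j) (hK : 0 < K) (hcK : Fintype.card ι * c' ≤ K)
    {φ : EuclideanSpace ℂ G} (hφ : ∑ x, φ x = 0) :
    ‖∑ i, (β i : ℂ) • leftRegular (g i) φ‖ ≤ (1 - ε ^ 2 / (16 * K ^ 2)) * (∑ i, β i) * ‖φ‖ := by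
  obtain ⟨a, b, hab⟩ := h.exists_div_two_mul_norm_le_norm_leftRegular_sub hφ
  set S := ∑ i, β i
  have hS : 0 ≤ S := sum_nonneg fun i _ => hβ i
  have hgap : (ε / 2 * ‖φ‖) ^ 2 ≤ ‖leftRegular (g a) φ - leftRegular (g b) φ‖ ^ 2 :=
    pow_le_pow_left₀ (by positivity) hab 2
  have hweights : S ^ 2 / K ^ 2 ≤ β a * β b := by
    rw [div_le_iff₀ (by positivity), mul_comm]
    exact sq_sum_le_sq_mul_mul_of_le_mul hβ hβc hcK a b
  have hsq : ‖∑ i, (β i : ℂ) • leftRegular (g i) φ‖ ^ 2 ≤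
      (S * ‖φ‖) ^ 2 * (1 - ε ^ 2 / (8 * K ^ 2)) :=
    calc ‖∑ i, (β i : ℂ) • leftRegular (g i) φ‖ ^ 2
        ≤ ‖φ‖ ^ 2 * S ^ 2 - β a * β b * ‖leftRegular (g a) φ - leftRegular (g b) φ‖ ^ 2 / 2 :=
          norm_sum_smul_sq_le_of_norm_eq hβ (fun i => (leftRegular (g i)).norm_map φ) a b
      _ ≤ ‖φ‖ ^ 2 * S ^ 2 - S ^ 2 / K ^ 2 * (ε / 2 * ‖φ‖) ^ 2 / 2 := by
          gcongr
          exact mul_nonneg (hβ a) (hβ b)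
      _ = (S * ‖φ‖) ^ 2 * (1 - ε ^ 2 / (8 * K ^ 2)) := by
          field_simp
          ring
  calc ‖∑ i, (β i : ℂ) • leftRegular (g i) φ‖
      ≤ S * ‖φ‖ * (1 - ε ^ 2 / (8 * K ^ 2) / 2) :=
        le_mul_one_sub_half_of_sq_le (by positivity) hsq
    _ = (1 - ε ^ 2 / (16 * K ^ 2)) * S * ‖φ‖ := by ring

end LeftRegular

theorem l2norm_eq_norm_toLp {G : Type u} [Fintype G] (φ : G → ℂ) :
    l2norm φ = ‖(WithLp.toLp 2 φ : EuclideanSpace ℂ G)‖ := by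
  simp [l2norm, EuclideanSpace.norm_eq]

theorem noAlmostInvariantVectors_of_l2norm {G : Type u} [Group G] [Fintype G] {ι : Type*}
    {g : ι → G} {ε : ℝ}
    (h : ∀ φ : G → ℂ, (∑ x, φ x) = 0 → l2norm φ = 1 →
      ∃ i j, ε < l2norm (fun x => φ ((g i * (g j)⁻¹)⁻¹ * x) - φ x)) :
    NoAlmostInvariantVectors g ε := by
  intro ψ hψ hψ1
  obtain ⟨i, j, hij⟩ := h ψ.ofLp hψ (by rw [l2norm_eq_norm_toLp]; exact hψ1)
  refine ⟨i, j, ?_⟩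
  rw [l2norm_eq_norm_toLp] at hij
  convert hij using 2
  ext x
  simp only [leftRegular_apply, PiLp.sub_apply]

/-- If `η = Σᵢ βᵢ δ_{gᵢ}` is a nonnegative measure with comparable weights
(`βᵢ ≤ c'·βⱼ`) and no mean-zero unit vector is `ε`-almost-invariant under all the
`δ_{gᵢgⱼ⁻¹}`, then convolution by `η` contracts mean-zero vectors:
`‖η ∗ φ‖₂ ≤ (1 - C₁)‖η‖₁‖φ‖₂`, with `C₁` depending only on `c'`, `ε` and `|I|`. -/
theorem contraction_from_no_almost_invariant_vectors
    (c' ε : ℝ) (n : ℕ) (hε : 0 < ε) :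
    ∃ C₁ : ℝ, 0 < C₁ ∧
      ∀ (G : Type u) [Group G] [Fintype G] (ι : Type v) [Fintype ι],
        Fintype.card ι = n →
        ∀ (g : ι → G) (β : ι → ℝ),
          (∀ i, 0 < β i) → (∀ i j, β i ≤ c' * β j) →
          (∀ φ : G → ℂ, (∑ x, φ x) = 0 → l2norm φ = 1 →
            ∃ i j, ε < l2norm (fun x => φ ((g i * (g j)⁻¹)⁻¹ * x) - φ x)) →
          ∀ φ : G → ℂ, (∑ x, φ x) = 0 →
            l2norm (fun x => ∑ i, (β i : ℂ) * φ ((g i)⁻¹ * x)) ≤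
              (1 - C₁) * (∑ i, β i) * l2norm φ := by
  set K : ℝ := max (n : ℝ) 1 * max c' 1
  have hK : 0 < K := by positivity
  refine ⟨ε ^ 2 / (16 * K ^ 2), by positivity, ?_⟩
  intro G _ _ ι _ hcard g β hβ hβc hno φ hφ
  rcases isEmpty_or_nonempty ι with hι | hι
  · simp [l2norm]
  have hcK : Fintype.card ι * c' ≤ K := by
    rw [hcard]
    exact (mul_le_mul_of_nonneg_left (le_max_left _ _) n.cast_nonneg).trans
      (mul_le_mul_of_nonneg_right (le_max_left _ _) (by positivity))
  have hconv : WithLp.toLp 2 (fun x => ∑ i, (β i : ℂ) * φ ((g i)⁻¹ * x)) =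
      ∑ i, (β i : ℂ) • leftRegular (g i) (WithLp.toLp 2 φ) := by
    ext x
    simp
  rw [l2norm_eq_norm_toLp, l2norm_eq_norm_toLp, hconv]
  exact (noAlmostInvariantVectors_of_l2norm hno).norm_sum_smul_leftRegular_le hε.le
    (fun i => (hβ i).le) hβc hK hcK hφ
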